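/- The Wick product f ⋆ g := Σ_{k≥0} (−ħ)^k/k! · Σ_{i₁,...,i_k} (∂^k f/∂z_{i₁}⋯∂z_{i_k}) · (∂^k g/∂z̄_{i₁}⋯∂z̄_{i_k}) defines an associative product on the formal power series ring ℂ[[z¹, z̄¹, ..., z^n, z̄^n]][[ħ]]. -/

import Mathlib

/-!
Write `Δ = Σᵢ ∂_{zᵢ} ⊗ ∂_{z̄ᵢ}` on `A ⊗ A`, so that `f ⋆ g = Σₖ ħᵏ cₖ μ(Δᵏ(f ⊗ g))` with
`cₖ = (-1)ᵏ/k!` and `μ` the multiplication. A star product `Σₖ ħᵏ Eₖ` is associative as soon as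
`Σ_{a+b=n} E_a(E_b(x, y), z) = Σ_{a+b=n} E_a(x, E_b(y, z))` for every `n`. By the Leibniz rule,
`Δ ∘ (μ ⊗ 1) = (μ ⊗ 1) ∘ (Δ₁₃ + Δ₂₃)` and `Δ ∘ (1 ⊗ μ) = (1 ⊗ μ) ∘ (Δ₁₂ + Δ₁₃)`, where the
`Δᵢⱼ` act on the factors `i, j` of `A ⊗ A ⊗ A` and commute because partial derivatives do.
Expanding with the binomial theorem and `c_{s+t} (s+t choose s) = c_s c_t`, both sides of the
identity become `Σ_{α+β+γ=n} c_α c_β c_γ μ₃(Δ₁₃^α Δ₂₃^β Δ₁₂^γ (x ⊗ y ⊗ z))`.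
-/

/-- `A n = ℂ[[z¹, z̄¹, ..., zⁿ, z̄ⁿ]]`: formal power series in the variables `z` (indexed by
`Sum.inl`) and `z̄` (indexed by `Sum.inr`). -/
abbrev A (n : ℕ) := MvPowerSeries (Fin n ⊕ Fin n) ℂ

/-- `W n = ℂ[[z¹, z̄¹, ..., zⁿ, z̄ⁿ]][[ħ]]`, the formal Weyl space. -/
abbrev W (n : ℕ) := PowerSeries (A n)

/-- Formal partial derivative with respect to the variable `v`. -/
noncomputable def pd {n : ℕ} (v : Fin n ⊕ Fin n) (f : A n) : A n :=
  fun m => ((m v : ℕ) + 1 : ℂ) * f (m + Finsupp.single v 1)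

/-- Iterated derivative `∂_{z_{i₁}}⋯∂_{z_{i_k}}` along a tuple of indices. -/
noncomputable def dzs {n k : ℕ} (i : Fin k → Fin n) (f : A n) : A n :=
  (List.ofFn i).foldl (fun acc v => pd (Sum.inl v) acc) f

/-- Iterated derivative `∂_{z̄_{i₁}}⋯∂_{z̄_{i_k}}` along a tuple of indices. -/
noncomputable def dzbars {n k : ℕ} (i : Fin k → Fin n) (f : A n) : A n :=
  (List.ofFn i).foldl (fun acc v => pd (Sum.inr v) acc) f

/-- The Wick product
`f ⋆ g = Σ_{k≥0} ((−ħ)^k/k!) Σ_{i₁,...,i_k} (∂_{z_{i₁}}⋯∂_{z_{i_k}} f)(∂_{z̄_{i₁}}⋯∂_{z̄_{i_k}} g)`,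
written out coefficientwise in the formal variable ħ (each ħ-coefficient is a finite sum). -/
noncomputable def wick {n : ℕ} (f g : W n) : W n :=
  PowerSeries.mk fun N =>
    ∑ k ∈ Finset.range (N + 1), ∑ p ∈ Finset.range (N - k + 1),
      (((-1 : ℂ) ^ k * (k.factorial : ℂ)⁻¹) •
        ∑ i : Fin k → Fin n,
          dzs i (PowerSeries.coeff (R := A n) p f) *
            dzbars i (PowerSeries.coeff (R := A n) (N - k - p) g))

open Finset TensorProduct LinearMap

namespace Finset.Nat

variable {M : Type*} [AddCommMonoid M]

theorem sum_antidiagonal_antidiagonal_rotate (n : ℕ) (φ : ℕ → ℕ → ℕ → M) :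
    ∑ p ∈ antidiagonal n, ∑ q ∈ antidiagonal p.1, φ q.1 q.2 p.2
      = ∑ p ∈ antidiagonal n, ∑ q ∈ antidiagonal p.1, φ q.2 p.2 q.1 := by
  simp only [Finset.sum_sigma']
  refine Finset.sum_nbij' (fun ⟨(_, b), (c, d)⟩ => ⟨(b + c, d), (b, c)⟩)
    (fun ⟨(_, b), (c, d)⟩ => ⟨(d + b, c), (d, b)⟩) ?_ ?_ ?_ ?_ ?_ <;>
  · rintro ⟨⟨_, _⟩, ⟨_, _⟩⟩ h
    simp only [mem_sigma, HasAntidiagonal.mem_antidiagonal] at h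
    obtain ⟨rfl, rfl⟩ := h
    first
    | rfl
    | (simp only [mem_sigma, HasAntidiagonal.mem_antidiagonal, and_true]; omega)

-- Both sides run over `a + b + p + q + r = n`; the right-hand sides group it as
-- `(a + b) + (p + (q + r))`.
theorem sum_antidiagonal_nest_left (n : ℕ) (φ : ℕ → ℕ → ℕ → ℕ → ℕ → M) :
    ∑ x ∈ antidiagonal n, ∑ y ∈ antidiagonal x.2, ∑ z ∈ antidiagonal y.1,
        ∑ w ∈ antidiagonal z.2, φ x.1 z.1 w.1 w.2 y.2
      = ∑ x ∈ antidiagonal n, ∑ y ∈ antidiagonal x.2, ∑ z ∈ antidiagonal y.2,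
        ∑ w ∈ antidiagonal x.1, φ w.1 w.2 y.1 z.1 z.2 := by
  simp only [Finset.sum_sigma']
  refine Finset.sum_nbij'
    (fun ⟨(a, _), (_, r), (b, _), (p, q)⟩ => ⟨(a + b, p + q + r), (p, q + r), (q, r), (a, b)⟩)
    (fun ⟨_, (p, _), (q, r), (a, b)⟩ => ⟨(a, b + p + q + r), (b + p + q, r), (b, p + q), (p, q)⟩)
    ?_ ?_ ?_ ?_ ?_ <;>
  · rintro ⟨⟨_, _⟩, ⟨_, _⟩, ⟨_, _⟩, ⟨_, _⟩⟩ h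
    simp only [mem_sigma, HasAntidiagonal.mem_antidiagonal] at h
    obtain ⟨rfl, rfl, rfl, rfl⟩ := h
    first
    | rfl
    | (simp only [mem_sigma, HasAntidiagonal.mem_antidiagonal, Sigma.mk.injEq, Prod.mk.injEq,
        heq_eq_eq, and_true, true_and]; omega)

theorem sum_antidiagonal_nest_right (n : ℕ) (φ : ℕ → ℕ → ℕ → ℕ → ℕ → M) :
    ∑ x ∈ antidiagonal n, ∑ y ∈ antidiagonal x.2, ∑ z ∈ antidiagonal y.2,
        ∑ w ∈ antidiagonal z.2, φ x.1 z.1 y.1 w.1 w.2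
      = ∑ x ∈ antidiagonal n, ∑ y ∈ antidiagonal x.2, ∑ z ∈ antidiagonal y.2,
        ∑ w ∈ antidiagonal x.1, φ w.1 w.2 y.1 z.1 z.2 := by
  simp only [Finset.sum_sigma']
  refine Finset.sum_nbij'
    (fun ⟨(a, _), (p, _), (b, _), (q, r)⟩ => ⟨(a + b, p + q + r), (p, q + r), (q, r), (a, b)⟩)
    (fun ⟨_, (p, _), (q, r), (a, b)⟩ => ⟨(a, p + b + q + r), (p, b + q + r), (b, q + r), (q, r)⟩)
    ?_ ?_ ?_ ?_ ?_ <;>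
  · rintro ⟨⟨_, _⟩, ⟨_, _⟩, ⟨_, _⟩, ⟨_, _⟩⟩ h
    simp only [mem_sigma, HasAntidiagonal.mem_antidiagonal] at h
    obtain ⟨rfl, rfl, rfl, rfl⟩ := h
    first
    | rfl
    | (simp only [mem_sigma, HasAntidiagonal.mem_antidiagonal, Sigma.mk.injEq, Prod.mk.injEq,
        heq_eq_eq, and_true, true_and]; omega)

end Finset.Nat

theorem TensorProduct.commute_map {R M N : Type*} [CommSemiring R] [AddCommMonoid M] [Module R M]
    [AddCommMonoid N] [Module R N] {f f' : Module.End R M} {g g' : Module.End R N}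
    (hf : Commute f f') (hg : Commute g g') : Commute (map f g) (map f' g') := by
  rw [Commute, SemiconjBy, ← TensorProduct.map_mul, ← TensorProduct.map_mul, hf.eq, hg.eq]

theorem MvPowerSeries.commute_pderiv {σ R : Type*} [CommSemiring R] (a b : σ) :
    Commute (pderiv R a : Module.End R (MvPowerSeries σ R)) (pderiv R b) := by
  classical
  rcases eq_or_ne a b with rfl | hab
  · exact Commute.refl _
  ext f m
  simp only [Module.End.mul_apply, Derivation.coeFn_coe, coeff_pderiv, Finsupp.add_apply,
    Finsupp.single_apply, hab, hab.symm, if_false, add_zero]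
  rw [add_right_comm m (Finsupp.single a 1)]
  ring

namespace WickProduct

section BiDeriv

variable {R B ι κ : Type*} [CommSemiring R] [CommSemiring B] [Algebra R B] [Fintype ι]
  (D : κ → Derivation R B B) (u v : ι → κ)

noncomputable def biDeriv : Module.End R (B ⊗[R] B) := ∑ i, map (D (u i)) (D (v i))

noncomputable def biDeriv₁₂ : Module.End R ((B ⊗[R] B) ⊗[R] B) := (biDeriv D u v).rTensor B

noncomputable def biDeriv₁₃ : Module.End R ((B ⊗[R] B) ⊗[R] B) :=
  ∑ i, map (map (D (u i)) 1) (D (v i))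

noncomputable def biDeriv₂₃ : Module.End R ((B ⊗[R] B) ⊗[R] B) :=
  ∑ i, map (map 1 (D (u i))) (D (v i))

theorem biDeriv_tmul (x y : B) :
    biDeriv D u v (x ⊗ₜ y) = ∑ i, D (u i) x ⊗ₜ D (v i) y := by
  simp [biDeriv, LinearMap.sum_apply]

theorem biDeriv₁₂_tmul (x y z : B) :
    biDeriv₁₂ D u v ((x ⊗ₜ y) ⊗ₜ z) = ∑ i, (D (u i) x ⊗ₜ D (v i) y) ⊗ₜ z := by
  simp [biDeriv₁₂, biDeriv_tmul, sum_tmul]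

theorem biDeriv₁₃_tmul (x y z : B) :
    biDeriv₁₃ D u v ((x ⊗ₜ y) ⊗ₜ z) = ∑ i, (D (u i) x ⊗ₜ y) ⊗ₜ D (v i) z := by
  simp [biDeriv₁₃, LinearMap.sum_apply]

theorem biDeriv₂₃_tmul (x y z : B) :
    biDeriv₂₃ D u v ((x ⊗ₜ y) ⊗ₜ z) = ∑ i, (x ⊗ₜ D (u i) y) ⊗ₜ D (v i) z := by
  simp [biDeriv₂₃, LinearMap.sum_apply]

variable {D}

theorem commute_biDeriv₁₂_biDeriv₁₃ (hD : ∀ a b, Commute (D a : Module.End R B) (D b)) :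
    Commute (biDeriv₁₂ D u v) (biDeriv₁₃ D u v) :=
  Commute.sum_right _ _ _ fun _ _ => commute_map
    (Commute.sum_left _ _ _ fun _ _ => commute_map (hD _ _) (Commute.one_right _))
    (Commute.one_left _)

theorem commute_biDeriv₁₂_biDeriv₂₃ (hD : ∀ a b, Commute (D a : Module.End R B) (D b)) :
    Commute (biDeriv₁₂ D u v) (biDeriv₂₃ D u v) :=
  Commute.sum_right _ _ _ fun _ _ => commute_map
    (Commute.sum_left _ _ _ fun _ _ => commute_map (Commute.one_right _) (hD _ _))
    (Commute.one_left _)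

theorem commute_biDeriv₁₃_biDeriv₂₃ (hD : ∀ a b, Commute (D a : Module.End R B) (D b)) :
    Commute (biDeriv₁₃ D u v) (biDeriv₂₃ D u v) :=
  Commute.sum_left _ _ _ fun _ _ => Commute.sum_right _ _ _ fun _ _ =>
    commute_map (commute_map (Commute.one_right _) (Commute.one_left _)) (hD _ _)

variable (D)

noncomputable abbrev mul₁₂ : (B ⊗[R] B) ⊗[R] B →ₗ[R] B ⊗[R] B := (mul' R B).rTensor B

noncomputable def mul₂₃ : (B ⊗[R] B) ⊗[R] B →ₗ[R] B ⊗[R] B :=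
  (mul' R B).lTensor B ∘ₗ (TensorProduct.assoc R B B B).toLinearMap

theorem mul₂₃_tmul (x y z : B) : mul₂₃ ((x ⊗ₜ[R] y) ⊗ₜ[R] z) = x ⊗ₜ (y * z) := by
  simp [mul₂₃]

theorem mul'_comp_mul₂₃ : mul' R B ∘ₗ mul₂₃ = mul' R B ∘ₗ mul₁₂ :=
  TensorProduct.ext_threefold fun x y z => by simp [mul₂₃_tmul, mul_assoc]

theorem biDeriv_comp_mul₁₂ :
    biDeriv D u v ∘ₗ mul₁₂ = mul₁₂ ∘ₗ (biDeriv₁₃ D u v + biDeriv₂₃ D u v) := by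
  refine TensorProduct.ext_threefold fun x y z => ?_
  simp only [LinearMap.comp_apply, rTensor_tmul, mul'_apply, biDeriv_tmul, LinearMap.add_apply,
    biDeriv₁₃_tmul, biDeriv₂₃_tmul, map_add, map_sum, Derivation.leibniz, smul_eq_mul, add_tmul,
    Finset.sum_add_distrib]
  rw [add_comm]
  simp only [mul_comm]

theorem biDeriv_comp_mul₂₃ :
    biDeriv D u v ∘ₗ mul₂₃ = mul₂₃ ∘ₗ (biDeriv₁₂ D u v + biDeriv₁₃ D u v) := by
  refine TensorProduct.ext_threefold fun x y z => ?_
  simp only [LinearMap.comp_apply, mul₂₃_tmul, biDeriv_tmul, LinearMap.add_apply,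
    biDeriv₁₂_tmul, biDeriv₁₃_tmul, map_add, map_sum, Derivation.leibniz, smul_eq_mul, tmul_add,
    Finset.sum_add_distrib]
  rw [add_comm]
  simp only [mul_comm]

theorem lTensor_biDeriv_comp_assoc :
    (biDeriv D u v).lTensor B ∘ₗ (TensorProduct.assoc R B B B).toLinearMap
      = (TensorProduct.assoc R B B B).toLinearMap ∘ₗ biDeriv₂₃ D u v :=
  TensorProduct.ext_threefold fun x y z => by simp [biDeriv₂₃_tmul, biDeriv_tmul, tmul_sum]

noncomputable def biDerivMul (k : ℕ) : B →ₗ[R] B →ₗ[R] B :=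
  (TensorProduct.mk R B B).compr₂ (mul' R B ∘ₗ biDeriv D u v ^ k)

theorem biDerivMul_apply (k : ℕ) (x y : B) :
    biDerivMul D u v k x y = mul' R B ((biDeriv D u v ^ k) (x ⊗ₜ y)) := rfl

noncomputable def triDerivMul (α β γ : ℕ) (x y z : B) : B :=
  mul' R B (mul₁₂ ((biDeriv₁₃ D u v ^ α * biDeriv₂₃ D u v ^ β * biDeriv₁₂ D u v ^ γ)
    ((x ⊗ₜ y) ⊗ₜ z)))

variable {D}

theorem biDerivMul_biDerivMul_left (hD : ∀ a b, Commute (D a : Module.End R B) (D b))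
    (a b : ℕ) (x y z : B) :
    biDerivMul D u v a (biDerivMul D u v b x y) z
      = ∑ p ∈ antidiagonal a, a.choose p.1 • triDerivMul D u v p.1 p.2 b x y z := by
  have hpow := Module.End.commute_pow_left_of_commute (biDeriv_comp_mul₁₂ D u v) a
  have hmul₁₂ : biDerivMul D u v b x y ⊗ₜ z = mul₁₂ ((biDeriv₁₂ D u v ^ b) ((x ⊗ₜ y) ⊗ₜ z)) := by
    rw [biDeriv₁₂, rTensor_pow, rTensor_tmul, rTensor_tmul, biDerivMul_apply]
  rw [biDerivMul_apply, hmul₁₂, ← LinearMap.comp_apply (biDeriv D u v ^ a), hpow,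
    (commute_biDeriv₁₃_biDeriv₂₃ u v hD).add_pow']
  simp only [LinearMap.comp_apply, LinearMap.sum_apply, map_sum]
  refine Finset.sum_congr rfl fun p _ => ?_
  rw [nsmul_eq_mul, Module.End.mul_apply, Module.End.natCast_apply, map_nsmul, map_nsmul]
  simp only [triDerivMul, Module.End.mul_apply]

theorem biDerivMul_biDerivMul_right (hD : ∀ a b, Commute (D a : Module.End R B) (D b))
    (a b : ℕ) (x y z : B) :
    biDerivMul D u v a x (biDerivMul D u v b y z)
      = ∑ p ∈ antidiagonal a, a.choose p.1 • triDerivMul D u v p.2 b p.1 x y z := by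
  have hpow := Module.End.commute_pow_left_of_commute (biDeriv_comp_mul₂₃ D u v) a
  have hassoc := Module.End.commute_pow_left_of_commute (lTensor_biDeriv_comp_assoc D u v) b
  have hmul₂₃ : x ⊗ₜ biDerivMul D u v b y z = mul₂₃ ((biDeriv₂₃ D u v ^ b) ((x ⊗ₜ y) ⊗ₜ z)) := by
    rw [mul₂₃, LinearMap.comp_apply, ← LinearMap.comp_apply _ (biDeriv₂₃ D u v ^ b), ← hassoc,
      LinearMap.comp_apply, LinearEquiv.coe_coe, assoc_tmul, lTensor_pow, lTensor_tmul,
      lTensor_tmul, biDerivMul_apply]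
  rw [biDerivMul_apply, hmul₂₃, ← LinearMap.comp_apply (biDeriv D u v ^ a), hpow,
    (commute_biDeriv₁₂_biDeriv₁₃ u v hD).add_pow']
  simp only [LinearMap.comp_apply, LinearMap.sum_apply, map_sum]
  refine Finset.sum_congr rfl fun p _ => ?_
  have hreorder : biDeriv₁₂ D u v ^ p.1 * biDeriv₁₃ D u v ^ p.2 * biDeriv₂₃ D u v ^ b
      = biDeriv₁₃ D u v ^ p.2 * biDeriv₂₃ D u v ^ b * biDeriv₁₂ D u v ^ p.1 := by
    have h₁₃ := (commute_biDeriv₁₂_biDeriv₁₃ u v hD).pow_pow p.1 p.2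
    have h₂₃ := (commute_biDeriv₁₂_biDeriv₂₃ u v hD).pow_pow p.1 b
    rw [mul_assoc, (h₁₃.mul_right h₂₃).eq]
  rw [nsmul_eq_mul, Module.End.mul_apply, Module.End.natCast_apply, map_nsmul, map_nsmul,
    ← LinearMap.comp_apply (mul' R B), mul'_comp_mul₂₃, ← Module.End.mul_apply, hreorder]
  rfl

end BiDeriv

section Cochain

variable (K : Type*) [Field K]

noncomputable def wickCoeff (k : ℕ) : K := (-1) ^ k * (k.factorial : K)⁻¹

theorem wickCoeff_add_mul_choose [CharZero K] (s t : ℕ) :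
    wickCoeff K (s + t) * ((s + t).choose s : K) = wickCoeff K s * wickCoeff K t := by
  have hchoose : ((s + t).choose s : K) * t.factorial * s.factorial = (s + t).factorial := by
    rw [add_comm s t]
    exact_mod_cast Nat.add_choose_mul_factorial_mul_factorial t s
  simp only [wickCoeff, pow_add]
  have hfact : ∀ m : ℕ, (m.factorial : K) ≠ 0 := fun m => Nat.cast_ne_zero.2 m.factorial_ne_zero
  field_simp
  rw [div_eq_div_iff (hfact _) (mul_ne_zero (hfact s) (hfact t)), ← hchoose]
  ring

theorem wickCoeff_smul_sum_choose [CharZero K] {M : Type*} [AddCommMonoid M] [Module K M]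
    (a : ℕ) (T : ℕ × ℕ → M) :
    wickCoeff K a • ∑ p ∈ antidiagonal a, a.choose p.1 • T p
      = ∑ p ∈ antidiagonal a, (wickCoeff K p.1 * wickCoeff K p.2) • T p := by
  rw [Finset.smul_sum]
  refine Finset.sum_congr rfl ?_
  rintro ⟨s, t⟩ hst
  obtain rfl : s + t = a := HasAntidiagonal.mem_antidiagonal.mp hst
  rw [← Nat.cast_smul_eq_nsmul K, smul_smul, wickCoeff_add_mul_choose]

variable {K} {B ι κ : Type*} [CommSemiring B] [Algebra K B] [Fintype ι]
  (D : κ → Derivation K B B) (u v : ι → κ)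

noncomputable def wickCochain (k : ℕ) : B →ₗ[K] B →ₗ[K] B := wickCoeff K k • biDerivMul D u v k

theorem wickCochain_apply (k : ℕ) (x y : B) :
    wickCochain D u v k x y = wickCoeff K k • biDerivMul D u v k x y := rfl

variable {D}

theorem wickCochain_assoc [CharZero K] (hD : ∀ a b, Commute (D a : Module.End K B) (D b))
    (n : ℕ) (x y z : B) :
    ∑ p ∈ antidiagonal n, wickCochain D u v p.1 (wickCochain D u v p.2 x y) z
      = ∑ p ∈ antidiagonal n, wickCochain D u v p.1 x (wickCochain D u v p.2 y z) := by
  set φ : ℕ → ℕ → ℕ → B := fun α β γ =>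
    (wickCoeff K α * wickCoeff K β * wickCoeff K γ) • triDerivMul D u v α β γ x y z
  have hleft : ∀ a b, wickCochain D u v a (wickCochain D u v b x y) z
      = ∑ q ∈ antidiagonal a, φ q.1 q.2 b := by
    intro a b
    simp only [wickCochain_apply, map_smul, LinearMap.smul_apply]
    rw [biDerivMul_biDerivMul_left u v hD, wickCoeff_smul_sum_choose, Finset.smul_sum]
    exact Finset.sum_congr rfl fun _ _ => by rw [smul_smul, mul_comm]
  have hright : ∀ a b, wickCochain D u v a x (wickCochain D u v b y z)
      = ∑ q ∈ antidiagonal a, φ q.2 b q.1 := by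
    intro a b
    simp only [wickCochain_apply, map_smul]
    rw [biDerivMul_biDerivMul_right u v hD, wickCoeff_smul_sum_choose, Finset.smul_sum]
    exact Finset.sum_congr rfl fun _ _ => by rw [smul_smul, ← mul_assoc, mul_comm, ← mul_assoc]
  simp only [hleft, hright]
  exact Finset.Nat.sum_antidiagonal_antidiagonal_rotate n φ

end Cochain

section StarProduct

variable {R M : Type*} [CommSemiring R] [Semiring M] [Module R M]

noncomputable def starProduct (E : ℕ → M →ₗ[R] M →ₗ[R] M) (f g : PowerSeries M) :
    PowerSeries M :=
  PowerSeries.mk fun n => ∑ p ∈ antidiagonal n, ∑ q ∈ antidiagonal p.2,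
    E p.1 (PowerSeries.coeff q.1 f) (PowerSeries.coeff q.2 g)

theorem starProduct_assoc {E : ℕ → M →ₗ[R] M →ₗ[R] M}
    (hE : ∀ n x y z, ∑ p ∈ antidiagonal n, E p.1 (E p.2 x y) z
      = ∑ p ∈ antidiagonal n, E p.1 x (E p.2 y z))
    (f g h : PowerSeries M) :
    starProduct E (starProduct E f g) h = starProduct E f (starProduct E g h) := by
  ext N
  simp only [starProduct, PowerSeries.coeff_mk, map_sum, LinearMap.sum_apply]
  open PowerSeries in
  refine (Finset.Nat.sum_antidiagonal_nest_left N fun a b p q r =>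
    E a (E b (coeff p f) (coeff q g)) (coeff r h)).trans (Eq.trans ?_
    (Finset.Nat.sum_antidiagonal_nest_right N fun a b p q r =>
      E a (coeff p f) (E b (coeff q g) (coeff r h))).symm)
  exact Finset.sum_congr rfl fun _ _ => Finset.sum_congr rfl fun _ _ =>
    Finset.sum_congr rfl fun _ _ => hE ..

end StarProduct

variable {n : ℕ}

theorem dzs_cons {k : ℕ} (j : Fin n) (i : Fin k → Fin n) (x : A n) :
    dzs (Fin.cons j i) x = dzs i (pd (Sum.inl j) x) := by
  simp [dzs, List.ofFn_succ]

theorem dzbars_cons {k : ℕ} (j : Fin n) (i : Fin k → Fin n) (x : A n) :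
    dzbars (Fin.cons j i) x = dzbars i (pd (Sum.inr j) x) := by
  simp [dzbars, List.ofFn_succ]

theorem pd_eq_pderiv (v : Fin n ⊕ Fin n) (f : A n) : pd v f = MvPowerSeries.pderiv ℂ v f := by
  ext m
  rw [MvPowerSeries.coeff_pderiv, mul_comm]
  rfl

theorem sum_dzs_mul_dzbars (k : ℕ) (x y : A n) :
    ∑ i : Fin k → Fin n, dzs i x * dzbars i y
      = biDerivMul (MvPowerSeries.pderiv ℂ) Sum.inl Sum.inr k x y := by
  induction k generalizing x y with
  | zero =>
    rw [biDerivMul_apply, pow_zero, Module.End.one_apply, mul'_apply, Fintype.sum_unique]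
    rfl
  | succ k ih =>
    rw [← (Fin.consEquiv fun _ => Fin n).sum_comp, Fintype.sum_prod_type, biDerivMul_apply,
      pow_succ, Module.End.mul_apply, biDeriv_tmul, map_sum, map_sum]
    refine Finset.sum_congr rfl fun j _ => ?_
    rw [← biDerivMul_apply, ← ih]
    refine Finset.sum_congr rfl fun i _ => ?_
    rw [show Fin.consEquiv (fun _ => Fin n) (j, i) = Fin.cons j i from rfl, dzs_cons, dzbars_cons,
      pd_eq_pderiv, pd_eq_pderiv]

theorem wick_eq_starProduct (f g : W n) :
    wick f g = starProduct (wickCochain (MvPowerSeries.pderiv ℂ) Sum.inl Sum.inr) f g := by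
  refine PowerSeries.ext fun N => ?_
  rw [wick, starProduct, PowerSeries.coeff_mk, PowerSeries.coeff_mk,
    Finset.Nat.sum_antidiagonal_eq_sum_range_succ_mk]
  refine Finset.sum_congr rfl fun k _ => ?_
  rw [Finset.Nat.sum_antidiagonal_eq_sum_range_succ_mk]
  refine Finset.sum_congr rfl fun p _ => ?_
  rw [sum_dzs_mul_dzbars]
  rfl

end WickProduct

/-- the Wick product defines an associative product on
`ℂ[[z¹, z̄¹, ..., zⁿ, z̄ⁿ]][[ħ]]`. -/
theorem stmt_3 (n : ℕ) (f g h : W n) :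
    wick (wick f g) h = wick f (wick g h) := by
  simp only [WickProduct.wick_eq_starProduct]
  exact WickProduct.starProduct_assoc
    (WickProduct.wickCochain_assoc Sum.inl Sum.inr MvPowerSeries.commute_pderiv) f g h
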